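/- arXiv:1403.5397 — 2 statements merged into one kernel-verified Lean document; each statement's English description precedes it below -/
import Mathlib

section
/- Let L : J → ℝ be a smooth Lagrangian and let G = (G^1,…,G^k) : J → ℝ^k have smooth components and be a conservation law for the Euler–Lagrange equations of L. Let Γ^i_{αβ} : J → ℝ be smooth SOPDE coefficients such that (a) at every point of J and every i, ∑_α Γ_α(∂L/∂v^i_α) = ∂L/∂q^i, where Γ_α = ∂/∂x^α + v^i_α ∂/∂q^i + Γ^i_{αβ} ∂/∂v^i_β, and (b) the SOPDE is integrable in the sense that through every point z ∈ J there passes an integral section: there exist a smooth φ : U → ℝ^n on an open neighborhood U of some x₀ ∈ ℝ^k with j¹φ(x₀) = z and ∂²φ^i/∂x^α∂x^β = Γ^i_{αβ}∘j¹φ on U. Then ∑_{α=1}^k Γ_α(G^α) = 0 at every point of J. -/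
open Function

noncomputable section

/-- The first jet space `J = ℝᵏ × ℝⁿ × (Fin n → Fin k → ℝ)`,
with coordinates `(xᵅ, qⁱ, vⁱ_α)`. -/
abbrev Jet (k n : ℕ) : Type :=
  (Fin k → ℝ) × (Fin n → ℝ) × (Fin n → Fin k → ℝ)

variable {k n : ℕ}

/-- Partial derivative `∂F/∂xᵅ` of a function on the jet space. -/
noncomputable def pdX (F : Jet k n → ℝ) (α : Fin k) (z : Jet k n) : ℝ :=
  deriv (fun t => F (Function.update z.1 α t, z.2.1, z.2.2)) (z.1 α)

/-- Partial derivative `∂F/∂qⁱ` of a function on the jet space. -/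
noncomputable def pdQ (F : Jet k n → ℝ) (i : Fin n) (z : Jet k n) : ℝ :=
  deriv (fun t => F (z.1, Function.update z.2.1 i t, z.2.2)) (z.2.1 i)

/-- Partial derivative `∂F/∂vⁱ_α` of a function on the jet space. -/
noncomputable def pdV (F : Jet k n → ℝ) (i : Fin n) (α : Fin k) (z : Jet k n) : ℝ :=
  deriv (fun t => F (z.1, z.2.1,
    Function.update z.2.2 i (Function.update (z.2.2 i) α t))) (z.2.2 i α)

/-- Partial derivative `∂φⁱ/∂xᵅ` of a map `φ : ℝᵏ → ℝⁿ`. -/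
noncomputable def pD (φ : (Fin k → ℝ) → (Fin n → ℝ)) (i : Fin n) (α : Fin k)
    (x : Fin k → ℝ) : ℝ :=
  deriv (fun t => φ (Function.update x α t) i) (x α)

/-- Second partial derivative `∂²φⁱ/∂xᵅ∂xᵝ` of a map `φ : ℝᵏ → ℝⁿ`. -/
noncomputable def pD2 (φ : (Fin k → ℝ) → (Fin n → ℝ)) (i : Fin n) (α β : Fin k)
    (x : Fin k → ℝ) : ℝ :=
  deriv (fun t => pD φ i β (Function.update x α t)) (x α)

/-- First prolongation `j¹φ : ℝᵏ → J` of `φ : ℝᵏ → ℝⁿ`. -/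
noncomputable def j1 (φ : (Fin k → ℝ) → (Fin n → ℝ)) (x : Fin k → ℝ) : Jet k n :=
  (x, φ x, fun i α => pD φ i α x)

/-- `φ` is a smooth solution of the Euler–Lagrange equations of the Lagrangian `L`:
`∑_α ∂/∂xᵅ[(∂L/∂vⁱ_α) ∘ j¹φ] = (∂L/∂qⁱ) ∘ j¹φ` for all `i`. -/
def IsELSolution (L : Jet k n → ℝ) (φ : (Fin k → ℝ) → (Fin n → ℝ)) : Prop :=
  ContDiff ℝ (⊤ : ℕ∞) φ ∧
  ∀ (i : Fin n) (x : Fin k → ℝ),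
    (∑ α : Fin k, deriv (fun t => pdV L i α (j1 φ (Function.update x α t))) (x α))
      = pdQ L i (j1 φ x)

/-- `G = (G¹, …, Gᵏ)` is a conservation law for the Euler–Lagrange equations of `L`:
`∑_α ∂/∂xᵅ(Gᵅ ∘ j¹φ) = 0` for every solution `φ`. -/
def IsConservationLaw (L : Jet k n → ℝ) (G : Fin k → Jet k n → ℝ) : Prop :=
  ∀ φ : (Fin k → ℝ) → (Fin n → ℝ), IsELSolution L φ →
    ∀ x : Fin k → ℝ,
      (∑ α : Fin k, deriv (fun t => G α (j1 φ (Function.update x α t))) (x α)) = 0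

/-- The vector field `Γ_α = ∂/∂xᵅ + vⁱ_α ∂/∂qⁱ + Γⁱ_{αβ} ∂/∂vⁱ_β` of a SOPDE applied
to a function `F` on the jet space. -/
noncomputable def sopdeOp (Γ : Fin n → Fin k → Fin k → Jet k n → ℝ) (α : Fin k)
    (F : Jet k n → ℝ) (z : Jet k n) : ℝ :=
  pdX F α z + (∑ j : Fin n, z.2.2 j α * pdQ F j z)
    + ∑ j : Fin n, ∑ β : Fin k, Γ j α β z * pdV F j β z

/-!
Along an integral section `φ` of the SOPDE, the second derivatives of `φ` are the `Γⁱ_{αβ}`,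
so the chain rule turns `∂/∂xᵅ (F ∘ j¹φ)` into `Γ_α(F) ∘ j¹φ`. Condition (a) then says that `φ`
solves the Euler–Lagrange equations, hence the conservation law gives `∑_α Γ_α(Gᵅ) = 0` along
`j¹φ`, and by (b) every point of `J` lies on such a prolongation.
-/

open Topology

theorem deriv_comp_eq_fderiv_apply {E : Type*} [NormedAddCommGroup E] [NormedSpace ℝ E]
    {F : E → ℝ} {c : ℝ → E} {w : E} {t₀ : ℝ} (hF : DifferentiableAt ℝ F (c t₀))
    (hc : HasDerivAt c w t₀) : deriv (fun t => F (c t)) t₀ = fderiv ℝ F (c t₀) w :=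
  (hF.hasFDerivAt.comp_hasDerivAt t₀ hc).deriv

namespace Jet

def basisX (α : Fin k) : Jet k n := (Pi.single α 1, 0, 0)

def basisQ (i : Fin n) : Jet k n := (0, Pi.single i 1, 0)

def basisV (i : Fin n) (α : Fin k) : Jet k n := (0, 0, Pi.single i (Pi.single α 1))

theorem pdX_eq_fderiv {F : Jet k n → ℝ} {z : Jet k n} (hF : DifferentiableAt ℝ F z)
    (α : Fin k) : pdX F α z = fderiv ℝ F z (basisX α) := by
  have hc := (hasDerivAt_update z.1 α (z.1 α)).prodMk
    ((hasDerivAt_const (z.1 α) z.2.1).prodMk (hasDerivAt_const (z.1 α) z.2.2))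
  have h := deriv_comp_eq_fderiv_apply (by simpa using hF) hc
  simp only [update_eq_self] at h
  exact h

theorem pdQ_eq_fderiv {F : Jet k n → ℝ} {z : Jet k n} (hF : DifferentiableAt ℝ F z)
    (i : Fin n) : pdQ F i z = fderiv ℝ F z (basisQ i) := by
  have hc := (hasDerivAt_const (z.2.1 i) z.1).prodMk
    ((hasDerivAt_update z.2.1 i (z.2.1 i)).prodMk (hasDerivAt_const (z.2.1 i) z.2.2))
  have h := deriv_comp_eq_fderiv_apply (by simpa using hF) hc
  simp only [update_eq_self] at h
  exact h

theorem pdV_eq_fderiv {F : Jet k n → ℝ} {z : Jet k n} (hF : DifferentiableAt ℝ F z)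
    (i : Fin n) (α : Fin k) : pdV F i α z = fderiv ℝ F z (basisV i α) := by
  have hv := (hasFDerivAt_update z.2.2 (i := i) _).comp_hasDerivAt (z.2.2 i α)
    (hasDerivAt_update (z.2.2 i) α (z.2.2 i α))
  have hc := (hasDerivAt_const (z.2.2 i α) z.1).prodMk
    ((hasDerivAt_const (z.2.2 i α) z.2.1).prodMk hv)
  have h := deriv_comp_eq_fderiv_apply (by simpa using hF) hc
  simp only [comp_apply, update_eq_self] at h
  have hdir : ContinuousLinearMap.pi (Pi.single i (ContinuousLinearMap.id ℝ (Fin k → ℝ)))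
      (Pi.single α 1) = (Pi.single i (Pi.single α 1) : Fin n → Fin k → ℝ) := by
    ext j β
    rcases eq_or_ne j i with rfl | hj <;> simp [*]
  rwa [hdir] at h

theorem eq_sum_basis (w : Jet k n) :
    w = (∑ γ, w.1 γ • basisX γ) + (∑ j, w.2.1 j • basisQ j)
      + ∑ j, ∑ β, w.2.2 j β • basisV j β := by
  refine Prod.ext ?_ (Prod.ext ?_ ?_) <;> ext <;>
    simp [basisX, basisQ, basisV, Prod.fst_sum, Prod.snd_sum, Finset.sum_apply, Pi.single_apply]

theorem fderiv_apply_eq_sum_pd {F : Jet k n → ℝ} {z : Jet k n} (hF : DifferentiableAt ℝ F z)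
    (w : Jet k n) :
    fderiv ℝ F z w = (∑ γ, w.1 γ * pdX F γ z) + (∑ j, w.2.1 j * pdQ F j z)
      + ∑ j, ∑ β, w.2.2 j β * pdV F j β z := by
  conv_lhs => rw [eq_sum_basis w]
  simp only [map_add, map_sum, map_smul, smul_eq_mul, pdX_eq_fderiv hF, pdQ_eq_fderiv hF,
    pdV_eq_fderiv hF]

theorem differentiable_pdV {L : Jet k n → ℝ} (hL : ContDiff ℝ 2 L) (i : Fin n) (α : Fin k) :
    Differentiable ℝ (pdV L i α) := by
  have hdL : ContDiff ℝ 1 (fderiv ℝ L) := hL.fderiv_right (by norm_num)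
  have heq : pdV L i α = fun z => fderiv ℝ L z (basisV i α) :=
    funext fun z => pdV_eq_fderiv (hL.differentiable (by norm_num) z) i α
  rw [heq]
  exact (hdL.differentiable one_ne_zero).clm_apply (differentiable_const _)

end Jet

theorem pD_eq_fderiv {φ : (Fin k → ℝ) → (Fin n → ℝ)} {x : Fin k → ℝ}
    (hφ : DifferentiableAt ℝ φ x) (i : Fin n) (β : Fin k) :
    pD φ i β x = fderiv ℝ φ x (Pi.single β 1) i := by
  have h := (hφ.hasFDerivAt.comp_hasDerivAt_of_eq (x β) (hasDerivAt_update x β (x β))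
    (update_eq_self β x).symm)
  exact (hasDerivAt_pi.mp h i).deriv

section IntegralSection

variable {U : Set (Fin k → ℝ)} {φ : (Fin k → ℝ) → (Fin n → ℝ)} {x : Fin k → ℝ}

theorem differentiableAt_pD (hU : IsOpen U) (hφ : ContDiffOn ℝ 2 φ U) (hx : x ∈ U)
    (i : Fin n) (β : Fin k) : DifferentiableAt ℝ (pD φ i β) x := by
  have hdφ : ContDiffOn ℝ 1 (fderiv ℝ φ) U := hφ.fderiv_of_isOpen hU (by norm_num)
  have heq : (fun y => fderiv ℝ φ y (Pi.single β 1) i) =ᶠ[𝓝 x] pD φ i β := by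
    filter_upwards [hU.mem_nhds hx] with y hy
    exact (pD_eq_fderiv ((hφ.differentiableOn (by norm_num)).differentiableAt
      (hU.mem_nhds hy)) i β).symm
  have hdφx := ((hdφ.differentiableOn one_ne_zero).differentiableAt
    (hU.mem_nhds hx)).clm_apply (differentiableAt_const (Pi.single β 1))
  exact (differentiableAt_pi.mp hdφx i).congr_of_eventuallyEq heq.symm

theorem hasDerivAt_j1_update (hU : IsOpen U) (hφ : ContDiffOn ℝ 2 φ U) (hx : x ∈ U)
    (α : Fin k) :
    HasDerivAt (fun t => j1 φ (update x α t))
      (Pi.single α 1, fun j => pD φ j α x, fun j β => pD2 φ j α β x) (x α) := by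
  have hupd := hasDerivAt_update x α (x α)
  have hφx : DifferentiableAt ℝ φ x :=
    (hφ.differentiableOn (by norm_num)).differentiableAt (hU.mem_nhds hx)
  refine hupd.prodMk ((hasDerivAt_pi.mpr fun j => ?_).prodMk
    (hasDerivAt_pi.mpr fun j => hasDerivAt_pi.mpr fun β => ?_))
  · exact ((differentiableAt_pi.mp hφx j).hasFDerivAt.comp_hasDerivAt_of_eq (x α) hupd
      (update_eq_self α x).symm).differentiableAt.hasDerivAt
  · exact ((differentiableAt_pD hU hφ hx j β).hasFDerivAt.comp_hasDerivAt_of_eq (x α) hupd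
      (update_eq_self α x).symm).differentiableAt.hasDerivAt

theorem deriv_comp_j1_update (hU : IsOpen U) (hφ : ContDiffOn ℝ 2 φ U) (hx : x ∈ U)
    {F : Jet k n → ℝ} (hF : DifferentiableAt ℝ F (j1 φ x)) (α : Fin k) :
    deriv (fun t => F (j1 φ (update x α t))) (x α)
      = pdX F α (j1 φ x) + (∑ j, pD φ j α x * pdQ F j (j1 φ x))
        + ∑ j, ∑ β, pD2 φ j α β x * pdV F j β (j1 φ x) := by
  rw [deriv_comp_eq_fderiv_apply (by simpa using hF) (hasDerivAt_j1_update hU hφ hx α),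
    update_eq_self, Jet.fderiv_apply_eq_sum_pd hF]
  simp [Pi.single_apply, ite_mul]

theorem sum_deriv_comp_j1_update_eq_sum_sopdeOp (hU : IsOpen U) (hφ : ContDiffOn ℝ 2 φ U)
    {Γ : Fin n → Fin k → Fin k → Jet k n → ℝ}
    (hφΓ : ∀ x ∈ U, ∀ (i : Fin n) (α β : Fin k), pD2 φ i α β x = Γ i α β (j1 φ x))
    (hx : x ∈ U) {F : Fin k → Jet k n → ℝ} (hF : ∀ α, DifferentiableAt ℝ (F α) (j1 φ x)) :
    ∑ α, deriv (fun t => F α (j1 φ (update x α t))) (x α)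
      = ∑ α, sopdeOp Γ α (F α) (j1 φ x) := by
  refine Finset.sum_congr rfl fun α _ => ?_
  simp only [deriv_comp_j1_update hU hφ hx (hF α), sopdeOp, hφΓ x hx]
  rfl

end IntegralSection

theorem statement5_general (k n : ℕ)
    (L : Jet k n → ℝ) (hL : ContDiff ℝ (⊤ : ℕ∞) L)
    (G : Fin k → Jet k n → ℝ) (hG : ∀ α, ContDiff ℝ (⊤ : ℕ∞) (G α))
    -- `G` is a conservation law: the divergence of `G ∘ j¹φ` vanishes on the domain
    -- of every (locally defined) solution `φ` of the Euler–Lagrange equations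
    (hcons : ∀ U : Set (Fin k → ℝ), IsOpen U →
      ∀ φ : (Fin k → ℝ) → (Fin n → ℝ), ContDiffOn ℝ (⊤ : ℕ∞) φ U →
      (∀ x ∈ U, ∀ i : Fin n,
        (∑ α : Fin k, deriv (fun t => pdV L i α (j1 φ (Function.update x α t))) (x α))
          = pdQ L i (j1 φ x)) →
      ∀ x ∈ U,
        (∑ α : Fin k, deriv (fun t => G α (j1 φ (Function.update x α t))) (x α)) = 0)
    (Γ : Fin n → Fin k → Fin k → Jet k n → ℝ)
    -- (a) the SOPDE satisfies `∑_α Γ_α(∂L/∂vⁱ_α) = ∂L/∂qⁱ`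
    (ha : ∀ (z : Jet k n) (i : Fin n),
      (∑ α : Fin k, sopdeOp Γ α (pdV L i α) z) = pdQ L i z)
    -- (b) the SOPDE is integrable: an integral section passes through each point of `J`
    (hb : ∀ z : Jet k n, ∃ (U : Set (Fin k → ℝ)) (x₀ : Fin k → ℝ)
        (φ : (Fin k → ℝ) → (Fin n → ℝ)), IsOpen U ∧ x₀ ∈ U ∧
      ContDiffOn ℝ (⊤ : ℕ∞) φ U ∧ j1 φ x₀ = z ∧
      (∀ x ∈ U, ∀ (i : Fin n) (α β : Fin k), pD2 φ i α β x = Γ i α β (j1 φ x))) :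
    ∀ z : Jet k n, (∑ α : Fin k, sopdeOp Γ α (G α) z) = 0 := by
  intro z
  obtain ⟨U, x₀, φ, hU, hx₀, hφ, rfl, hφΓ⟩ := hb z
  have hφ2 : ContDiffOn ℝ 2 φ U := hφ.of_le (by norm_cast)
  have hL2 : ContDiff ℝ 2 L := hL.of_le (by norm_cast)
  rw [← sum_deriv_comp_j1_update_eq_sum_sopdeOp hU hφ2 hφΓ hx₀
    fun α => ((hG α).differentiable (by simp)).differentiableAt]
  refine hcons U hU φ hφ (fun x hx i => ?_) x₀ hx₀
  rw [sum_deriv_comp_j1_update_eq_sum_sopdeOp hU hφ2 hφΓ hx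
    fun α => (Jet.differentiable_pdV hL2 i α).differentiableAt]
  exact ha _ i

/-- if `G` is a conservation law, then for every integrable SOPDE `Γ`
satisfying `Γ_α(∂L/∂vⁱ_α) = ∂L/∂qⁱ`, one has `∑_α Γ_α(Gᵅ) = 0` everywhere. -/
theorem statement5 (k n : ℕ) (hk : 1 ≤ k) (hn : 1 ≤ n)
    (L : Jet k n → ℝ) (hL : ContDiff ℝ (⊤ : ℕ∞) L)
    (G : Fin k → Jet k n → ℝ) (hG : ∀ α, ContDiff ℝ (⊤ : ℕ∞) (G α))
    -- `G` is a conservation law: the divergence of `G ∘ j¹φ` vanishes on the domain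
    -- of every (locally defined) solution `φ` of the Euler–Lagrange equations
    (hcons : ∀ U : Set (Fin k → ℝ), IsOpen U →
      ∀ φ : (Fin k → ℝ) → (Fin n → ℝ), ContDiffOn ℝ (⊤ : ℕ∞) φ U →
      (∀ x ∈ U, ∀ i : Fin n,
        (∑ α : Fin k, deriv (fun t => pdV L i α (j1 φ (Function.update x α t))) (x α))
          = pdQ L i (j1 φ x)) →
      ∀ x ∈ U,
        (∑ α : Fin k, deriv (fun t => G α (j1 φ (Function.update x α t))) (x α)) = 0)
    (Γ : Fin n → Fin k → Fin k → Jet k n → ℝ)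
    (hΓ : ∀ i α β, ContDiff ℝ (⊤ : ℕ∞) (Γ i α β))
    -- (a) the SOPDE satisfies `∑_α Γ_α(∂L/∂vⁱ_α) = ∂L/∂qⁱ`
    (ha : ∀ (z : Jet k n) (i : Fin n),
      (∑ α : Fin k, sopdeOp Γ α (pdV L i α) z) = pdQ L i z)
    -- (b) the SOPDE is integrable: an integral section passes through each point of `J`
    (hb : ∀ z : Jet k n, ∃ (U : Set (Fin k → ℝ)) (x₀ : Fin k → ℝ)
        (φ : (Fin k → ℝ) → (Fin n → ℝ)), IsOpen U ∧ x₀ ∈ U ∧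
      ContDiffOn ℝ (⊤ : ℕ∞) φ U ∧ j1 φ x₀ = z ∧
      (∀ x ∈ U, ∀ (i : Fin n) (α β : Fin k), pD2 φ i α β x = Γ i α β (j1 φ x))) :
    ∀ z : Jet k n, (∑ α : Fin k, sopdeOp Γ α (G α) z) = 0 :=
  statement5_general k n L hL G hG hcons Γ ha hb
end
end

section
/- Let L : J → ℝ and X^i : J → ℝ (1 ≤ i ≤ n) be smooth. Then for all x ∈ ℝ^k, q ∈ ℝ^n, v ∈ (Fin n → Fin k → ℝ) and all w = (w^j_{αβ}) ∈ (Fin n → Fin k → Fin k → ℝ), the following identity holds, where every function and partial derivative is evaluated at (x,q,v) and T_α denotes the operator T_α(F) = ∂F/∂x^α + v^j_α ∂F/∂q^j + w^j_{αβ} ∂F/∂v^j_β: X^i ∂L/∂q^i + (∂X^i/∂x^α + v^j_α ∂X^i/∂q^j + w^j_{αβ} ∂X^i/∂v^j_β) ∂L/∂v^i_α = −∑_i (∑_α T_α(∂L/∂v^i_α) − ∂L/∂q^i) X^i + ∑_α T_α(X^i ∂L/∂v^i_α). (This is the identity d_{X^{(1)}}L = −(δL)^V(X∘π_{2,1}) +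 d_{T^{(1)}_α}[(Θ^α_L)^V(X)] in coordinates on the second jet space.) -/
open Function

noncomputable section

variable {k n : ℕ}

/-- The operator `T_α = ∂/∂xᵅ + vʲ_α ∂/∂qʲ + wʲ_{αβ} ∂/∂vʲ_β` at a point of the second
jet space (coordinates `(z, w)`), applied to a function `F` on the first jet space. -/
noncomputable def T2 (w : Fin n → Fin k → Fin k → ℝ) (α : Fin k)
    (F : Jet k n → ℝ) (z : Jet k n) : ℝ :=
  pdX F α z + (∑ j : Fin n, z.2.2 j α * pdQ F j z)
    + ∑ j : Fin n, ∑ β : Fin k, w j α β * pdV F j β z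

/-! `T2 w α` is the derivative along the vector `(e_α, (vʲ_α)ⱼ, (wʲ_{αβ})ⱼβ)` of the jet space,
hence a derivation. The Leibniz rule applied to `T_α(Xⁱ ∂L/∂vⁱ_α)` produces the term
`(T_α Xⁱ) ∂L/∂vⁱ_α` of the left-hand side and cancels the `T_α(∂L/∂vⁱ_α) Xⁱ` term of the
Euler–Lagrange expression. -/

lemma hasDerivAt_update_update {𝕜 ι κ : Type*} [NontriviallyNormedField 𝕜] [DecidableEq ι]
    [DecidableEq κ] [Fintype ι] [Fintype κ] (m : ι → κ → 𝕜) (i : ι) (α : κ) (t : 𝕜) :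
    HasDerivAt (fun s => update m i (update (m i) α s)) (Pi.single i (Pi.single α 1)) t := by
  refine hasDerivAt_pi.2 fun j => ?_
  rcases eq_or_ne j i with rfl | hj
  · simpa using hasDerivAt_update (m j) α t
  · simpa [update_of_ne hj, Pi.single_eq_of_ne hj] using hasDerivAt_const t (m j)

section

variable {F : Jet k n → ℝ} {z : Jet k n}

lemma pdX_eq_fderiv (hF : DifferentiableAt ℝ F z) (α : Fin k) :
    pdX F α z = fderiv ℝ F z (Pi.single α 1, 0, 0) :=
  (HasFDerivAt.comp_hasDerivAt_of_eq _ hF.hasFDerivAt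
    ((hasDerivAt_update z.1 α _).prodMk ((hasDerivAt_const _ _).prodMk (hasDerivAt_const _ _)))
    (by simp)).deriv

lemma pdQ_eq_fderiv (hF : DifferentiableAt ℝ F z) (i : Fin n) :
    pdQ F i z = fderiv ℝ F z (0, Pi.single i 1, 0) :=
  (HasFDerivAt.comp_hasDerivAt_of_eq _ hF.hasFDerivAt
    ((hasDerivAt_const _ _).prodMk ((hasDerivAt_update z.2.1 i _).prodMk (hasDerivAt_const _ _)))
    (by simp)).deriv

lemma pdV_eq_fderiv (hF : DifferentiableAt ℝ F z) (i : Fin n) (α : Fin k) :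
    pdV F i α z = fderiv ℝ F z (0, 0, Pi.single i (Pi.single α 1)) :=
  (HasFDerivAt.comp_hasDerivAt_of_eq _ hF.hasFDerivAt
    ((hasDerivAt_const _ _).prodMk ((hasDerivAt_const _ _).prodMk
      (hasDerivAt_update_update z.2.2 i α _)))
    (by simp)).deriv

lemma differentiable_pdV (hF : ContDiff ℝ 2 F) (i : Fin n) (α : Fin k) :
    Differentiable ℝ (pdV F i α) := by
  rw [funext fun z => pdV_eq_fderiv (hF.differentiable two_ne_zero z) i α]
  exact ((hF.fderiv_right (m := 1) (by norm_num)).clm_apply contDiff_const).differentiable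
    one_ne_zero

def totalDir (z : Jet k n) (w : Fin n → Fin k → Fin k → ℝ) (α : Fin k) : Jet k n :=
  (Pi.single α 1, fun j => z.2.2 j α, fun j β => w j α β)

lemma totalDir_eq_sum (z : Jet k n) (w : Fin n → Fin k → Fin k → ℝ) (α : Fin k) :
    totalDir z w α = (Pi.single α 1, 0, 0) + ∑ j, z.2.2 j α • (0, Pi.single j 1, 0)
      + ∑ j, ∑ β, w j α β • (0, 0, Pi.single j (Pi.single β 1)) := by
  ext <;> simp [totalDir, Prod.fst_sum, Prod.snd_sum, Finset.sum_apply, Pi.single_apply]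

lemma T2_eq_fderiv (hF : DifferentiableAt ℝ F z) (w : Fin n → Fin k → Fin k → ℝ) (α : Fin k) :
    T2 w α F z = fderiv ℝ F z (totalDir z w α) := by
  simp only [T2, totalDir_eq_sum, map_add, map_sum, map_smul, smul_eq_mul, pdX_eq_fderiv hF,
    pdQ_eq_fderiv hF, pdV_eq_fderiv hF]

end

lemma T2_sum_mul {ι : Type*} {s : Finset ι} {F G : ι → Jet k n → ℝ} {z : Jet k n}
    (hF : ∀ i ∈ s, DifferentiableAt ℝ (F i) z) (hG : ∀ i ∈ s, DifferentiableAt ℝ (G i) z)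
    (w : Fin n → Fin k → Fin k → ℝ) (α : Fin k) :
    T2 w α (fun z' => ∑ i ∈ s, F i z' * G i z') z
      = ∑ i ∈ s, (T2 w α (F i) z * G i z + F i z * T2 w α (G i) z) := by
  have hFG : ∀ i ∈ s, DifferentiableAt ℝ (fun z' => F i z' * G i z') z :=
    fun i hi => (hF i hi).mul (hG i hi)
  rw [T2_eq_fderiv (DifferentiableAt.fun_sum hFG), fderiv_fun_sum hFG, sum_apply]
  refine Finset.sum_congr rfl fun i hi => ?_
  rw [fderiv_fun_mul (hF i hi) (hG i hi), T2_eq_fderiv (hF i hi), T2_eq_fderiv (hG i hi)]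
  simp only [add_apply, smul_apply, smul_eq_mul]
  ring

theorem statement8_general (k n : ℕ)
    (L : Jet k n → ℝ) (hL : ContDiff ℝ (⊤ : ℕ∞) L)
    (X : Fin n → Jet k n → ℝ) (hX : ∀ i, ContDiff ℝ (⊤ : ℕ∞) (X i)) :
    ∀ (z : Jet k n) (w : Fin n → Fin k → Fin k → ℝ),
      (∑ i : Fin n, X i z * pdQ L i z)
      + (∑ i : Fin n, ∑ α : Fin k,
          (pdX (X i) α z + (∑ j : Fin n, z.2.2 j α * pdQ (X i) j z)
            + ∑ j : Fin n, ∑ β : Fin k, w j α β * pdV (X i) j β z) * pdV L i α z)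
      = - (∑ i : Fin n,
            ((∑ α : Fin k, T2 w α (pdV L i α) z) - pdQ L i z) * X i z)
        + ∑ α : Fin k, T2 w α (fun z' => ∑ i : Fin n, X i z' * pdV L i α z') z := by
  intro z w
  have hXd : ∀ i ∈ Finset.univ, DifferentiableAt ℝ (X i) z :=
    fun i _ => (hX i).differentiable (by simp) z
  have hPd : ∀ α, ∀ i ∈ Finset.univ, DifferentiableAt ℝ (pdV L i α) z :=
    fun α i _ => differentiable_pdV (hL.of_le ENat.LEInfty.out) i α z
  change _ + ∑ i, ∑ α, T2 w α (X i) z * pdV L i α z = _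
  simp only [T2_sum_mul hXd (hPd _)]
  rw [Finset.sum_comm (γ := Fin k), ← Finset.sum_neg_distrib, ← Finset.sum_add_distrib,
    ← Finset.sum_add_distrib]
  refine Finset.sum_congr rfl fun i _ => ?_
  simp only [Finset.sum_add_distrib, sub_mul, Finset.sum_mul, mul_comm (X i z)]
  ring

/-- the coordinate identity
`d_{X⁽¹⁾}L = −(δL)ⱽ(X ∘ π₂₁) + d_{T⁽¹⁾_α}[(Θᵅ_L)ⱽ(X)]` on the second jet space. -/
theorem statement8 (k n : ℕ) (hk : 1 ≤ k) (hn : 1 ≤ n)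
    (L : Jet k n → ℝ) (hL : ContDiff ℝ (⊤ : ℕ∞) L)
    (X : Fin n → Jet k n → ℝ) (hX : ∀ i, ContDiff ℝ (⊤ : ℕ∞) (X i)) :
    ∀ (z : Jet k n) (w : Fin n → Fin k → Fin k → ℝ),
      (∑ i : Fin n, X i z * pdQ L i z)
      + (∑ i : Fin n, ∑ α : Fin k,
          (pdX (X i) α z + (∑ j : Fin n, z.2.2 j α * pdQ (X i) j z)
            + ∑ j : Fin n, ∑ β : Fin k, w j α β * pdV (X i) j β z) * pdV L i α z)
      = - (∑ i : Fin n,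
            ((∑ α : Fin k, T2 w α (pdV L i α) z) - pdQ L i z) * X i z)
        + ∑ α : Fin k, T2 w α (fun z' => ∑ i : Fin n, X i z' * pdV L i α z') z :=
  statement8_general k n L hL X hX
end
end
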